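/- Completeness of AX for the class M of all causal simulation models: every L-formula that is true in every causal simulation model is a theorem of AX; equivalently, every AX-consistent L-formula is satisfied by some causal simulation model. -/

import Mathlib

set_option maxHeartbeats 1000000

namespace CausalSim

/-! ### Propositional syntax -/

/-- Propositional formulas over atoms `X_i`. -/
inductive PropForm : Type
  | atom : ℕ → PropForm
  | neg : PropForm → PropForm
  | and : PropForm → PropForm → PropForm
  | or : PropForm → PropForm → PropForm
  deriving DecidableEq

def PropForm.imp (φ ψ : PropForm) : PropForm := .or (.neg φ) ψ

/-- A fixed propositional contradiction. -/
def PropForm.bot : PropForm := .and (.atom 0) (.neg (.atom 0))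

/-- Its negation, a fixed tautology. -/
def PropForm.top : PropForm := PropForm.neg PropForm.bot

def PropForm.eval (v : ℕ → Bool) : PropForm → Bool
  | .atom i => v i
  | .neg φ => !(φ.eval v)
  | .and φ ψ => φ.eval v && ψ.eval v
  | .or φ ψ => φ.eval v || ψ.eval v

/-- `L_int`: ordered conjunctions of literals over distinct atoms, represented by
the list of literals `(index, polarity)`, with strictly increasing indices.
The empty list represents the empty intervention `⊤`. -/
abbrev Lint : Type := {l : List (ℕ × Bool) // l.Chain' fun p q => p.1 < q.1}

instance : DecidableEq Lint := fun a b =>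
  decidable_of_iff (a.1 = b.1) Subtype.ext_iff.symm

def Lint.top : Lint := ⟨[], List.isChain_nil⟩

/-- The partial assignment (intervention) specified by `α ∈ L_int`. -/
def Lint.itv (α : Lint) : ℕ → Option Bool :=
  fun i => (α.1.find? fun p => p.1 == i).map Prod.snd

def PropForm.lit (p : ℕ × Bool) : PropForm :=
  if p.2 then .atom p.1 else .neg (.atom p.1)

/-- `α ∈ L_int` regarded as a propositional formula (conjunction of its literals;
`⊤` for the empty intervention). -/
def Lint.toProp (α : Lint) : PropForm :=
  match α.1 with
  | [] => PropForm.top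
  | p :: rest => rest.foldl (fun acc q => .and acc (.lit q)) (.lit p)

/-! ### The language `L` -/

/-- The causal simulation language `L`: propositional formulas over the atoms
`X ∪ L_cond`, where a conditional `[α]β` has antecedent `α ∈ L_int` and
consequent `β ∈ L_prop`. -/
inductive LForm : Type
  | atom : ℕ → LForm
  | cond : Lint → PropForm → LForm
  | neg : LForm → LForm
  | and : LForm → LForm → LForm
  | or : LForm → LForm → LForm

def LForm.imp (φ ψ : LForm) : LForm := .or (.neg φ) ψ

def LForm.iff (φ ψ : LForm) : LForm := .and (φ.imp ψ) (ψ.imp φ)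

/-- `⟨α⟩β`, an abbreviation for `¬[α]¬β`. -/
def LForm.dia (α : Lint) (β : PropForm) : LForm := .neg (.cond α (.neg β))

/-- The embedding of `L_prop` into `L`. -/
def PropForm.toL : PropForm → LForm
  | .atom i => .atom i
  | .neg φ => .neg φ.toL
  | .and φ ψ => .and φ.toL ψ.toL
  | .or φ ψ => .or φ.toL ψ.toL

/-- Evaluation of an `L`-formula treating the elements of `X ∪ L_cond` as
propositional atoms: `v` assigns values to the `X`-atoms and `w` to the
conditional atoms. -/
def LForm.evalA (v : ℕ → Bool) (w : Lint → PropForm → Bool) : LForm → Bool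
  | .atom i => v i
  | .cond α β => w α β
  | .neg φ => !(φ.evalA v w)
  | .and φ ψ => φ.evalA v w && ψ.evalA v w
  | .or φ ψ => φ.evalA v w || ψ.evalA v w

/-- Substitution instances of propositional tautologies over the atoms `X ∪ L_cond`. -/
def Tautology (φ : LForm) : Prop := ∀ v w, φ.evalA v w = true

/-! ### Turing machines over a Boolean variable tape, and interventions -/

/-- A transition rule `((q, read), (q', write, moveRight))`. -/
abbrev Rule : Type := (ℕ × Bool) × (ℕ × Bool × Bool)

/-- A (possibly non-deterministic) Turing machine, given by its finite list of
transition rules; the initial control state is `0`, and the machine halts in a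
configuration to which no rule applies. -/
abbrev Machine : Type := List Rule

/-- A configuration: control state, head position, and tape contents. -/
structure Cfg where
  q : ℕ
  pos : ℕ
  tape : ℕ → Bool

/-- The initial tape: the intervention `itv` first sets the intervened variables. -/
def initTape (itv : ℕ → Option Bool) (x : ℕ → Bool) : ℕ → Bool :=
  fun i => (itv i).getD (x i)

/-- Writing under an intervention: writes to intervened variables are ignored. -/
def writeTape (itv : ℕ → Option Bool) (t : ℕ → Bool) (pos : ℕ) (b : Bool) : ℕ → Bool :=
  if itv pos = none then Function.update t pos b else t

def movePos (p : ℕ) (right : Bool) : ℕ := if right then p + 1 else p - 1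

/-- One step of the intervened machine `I_itv(T)`. -/
def MStep (T : Machine) (itv : ℕ → Option Bool) (c c' : Cfg) : Prop :=
  ∃ r ∈ T, r.1 = (c.q, c.tape c.pos) ∧
    c' = ⟨r.2.1, movePos c.pos r.2.2.2, writeTape itv c.tape c.pos r.2.2.1⟩

/-- A halted configuration: no rule applies. -/
def Halted (T : Machine) (c : Cfg) : Prop := ∀ r ∈ T, r.1 ≠ (c.q, c.tape c.pos)

/-- The set of result tapes of halting executions of `I_itv(T)` on input `x`. -/
def Outputs (T : Machine) (itv : ℕ → Option Bool) (x : ℕ → Bool) : Set (ℕ → Bool) :=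
  {y | ∃ c : Cfg, Relation.ReflTransGen (MStep T itv) ⟨0, 0, initTape itv x⟩ c ∧
        Halted T c ∧ c.tape = y}

/-- Deterministic machines: at most one rule per (state, read symbol). -/
def Machine.Det (T : Machine) : Prop := ∀ r₁ ∈ T, ∀ r₂ ∈ T, r₁.1 = r₂.1 → r₁ = r₂

/-- State descriptions have finite support. -/
def FinSupp (x : ℕ → Bool) : Prop := {i | x i = true}.Finite

/-- Machines with at least one halting execution on every input tape under
every intervention. -/
def Machine.TotalHalting (T : Machine) : Prop :=
  ∀ (α : Lint) (x : ℕ → Bool), FinSupp x → (Outputs T α.itv x).Nonempty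

/-- Finite state machines: over all inputs and interventions, the machine reads and
writes only boundedly many tape variables. -/
def Machine.FiniteState (T : Machine) : Prop :=
  ∃ B : ℕ, ∀ (α : Lint) (x : ℕ → Bool), FinSupp x →
    ∀ c : Cfg, Relation.ReflTransGen (MStep T α.itv) ⟨0, 0, initTape α.itv x⟩ c → c.pos < B

/-! ### Causal simulation models and satisfaction -/

/-- A causal simulation model: a machine together with a state description with
finite support. -/
structure CSM where
  T : Machine
  x : ℕ → Bool
  fin : FinSupp x

/-- Satisfaction, generically in the map sending each intervention `α ∈ L_int`
to the set of output tapes of the corresponding halting executions. -/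
def SatGen (O : Lint → Set (ℕ → Bool)) (x : ℕ → Bool) : LForm → Prop
  | .atom i => x i = true
  | .cond α β => ∀ y ∈ O α, β.eval y = true
  | .neg φ => ¬ SatGen O x φ
  | .and φ ψ => SatGen O x φ ∧ SatGen O x ψ
  | .or φ ψ => SatGen O x φ ∨ SatGen O x ψ

/-- `(T, x) ⊨ φ`. -/
def CSM.Sat (M : CSM) (φ : LForm) : Prop :=
  SatGen (fun α => Outputs M.T α.itv M.x) M.x φ

/-- The class `M` of all causal simulation models. -/
def inM (_ : CSM) : Prop := True

/-- The class `M_det`. -/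
def inMdet (M : CSM) : Prop := M.T.Det

/-- The class `M↓`. -/
def inMhalt (M : CSM) : Prop := M.T.TotalHalting

/-- The class `M↓_det`. -/
def inMdethalt (M : CSM) : Prop := M.T.Det ∧ M.T.TotalHalting

/-! ### The axiomatic systems -/

/-- Derivability from: propositional tautologies (over atoms `X ∪ L_cond`),
the axioms `R` and `K`, extra axioms `extra`, modus ponens, and the rule `RW`. -/
inductive Deriv (extra : LForm → Prop) : LForm → Prop
  | taut {φ} : Tautology φ → Deriv extra φ
  | extra {φ} : extra φ → Deriv extra φ
  | axR (α : Lint) : Deriv extra (.cond α α.toProp)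
  | axK (α : Lint) (β γ : PropForm) :
      Deriv extra ((LForm.cond α (β.imp γ)).imp ((LForm.cond α β).imp (.cond α γ)))
  | mp {φ ψ} : Deriv extra (φ.imp ψ) → Deriv extra φ → Deriv extra ψ
  | rw (α : Lint) {β β' : PropForm} :
      Deriv extra (β.imp β').toL → Deriv extra ((LForm.cond α β).imp (.cond α β'))

/-- Instances of axiom `F : ⟨α⟩β → [α]β`. -/
def axF (φ : LForm) : Prop :=
  ∃ (α : Lint) (β : PropForm), φ = (LForm.dia α β).imp (.cond α β)

/-- Instances of axiom `D : [α]β → ⟨α⟩β`. -/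
def axD (φ : LForm) : Prop :=
  ∃ (α : Lint) (β : PropForm), φ = (LForm.cond α β).imp (LForm.dia α β)

def AX : LForm → Prop := Deriv fun _ => False
def AXdet : LForm → Prop := Deriv axF
def AXhalt : LForm → Prop := Deriv axD
def AXdethalt : LForm → Prop := Deriv fun φ => axF φ ∨ axD φ

end CausalSim
namespace CausalSim

/-! ### Normal form clauses and selection functions -/

def bigAndL : List LForm → LForm
  | [] => PropForm.top.toL
  | φ :: rest => rest.foldl .and φ

def bigOrL : List LForm → LForm
  | [] => PropForm.bot.toL
  | φ :: rest => rest.foldl .or φ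

def bigOrP : List PropForm → PropForm
  | [] => PropForm.bot
  | φ :: rest => rest.foldl .or φ

/-- The data of a conjunctive clause
`π ∧ ⋀_{i∈I}([α_i] ⋁_{j∈J_i} β_{i,j}) ∧ ⋀_{k∈K} ⟨α_k⟩ β_k`. -/
structure Clause where
  pi : PropForm
  boxes : List (Lint × List Lint)
  dias : List (Lint × Lint)

/-- The `α_i` (for distinct `i ∈ I`) are pairwise distinct. -/
def Clause.wf (δ : Clause) : Prop := (δ.boxes.map Prod.fst).Pairwise (· ≠ ·)

def Clause.toLForm (δ : Clause) : LForm :=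
  .and δ.pi.toL (.and
    (bigAndL (δ.boxes.map fun p => .cond p.1 (bigOrP (p.2.map Lint.toProp))))
    (bigAndL (δ.dias.map fun p => LForm.dia p.1 p.2.toProp)))

/-- `S_δ`: the antecedents occurring in the clause `δ`. -/
def Clause.ants (δ : Clause) : List Lint := δ.boxes.map Prod.fst ++ δ.dias.map Prod.fst

/-- A list of literals is propositionally consistent. -/
def LitsConsistent (l : List (ℕ × Bool)) : Prop :=
  ∀ i, ¬((i, true) ∈ l ∧ (i, false) ∈ l)

/-- `γ` is the `L_int`-equivalent of the conjunction of the literals `l`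
(reordering and deletion of repeated literals). -/
def Lint.IsEquivOf (γ : Lint) (l : List (ℕ × Bool)) : Prop := γ.1.toFinset = l.toFinset

/-- `f` is a selection function for the clause `δ`. -/
def IsSelection (δ : Clause) (f : Lint → List Lint) : Prop :=
  (∀ α ∈ δ.ants, α ∉ δ.dias.map Prod.fst → f α = []) ∧
  (∀ α ∈ δ.dias.map Prod.fst, ∃ sel : Lint × Lint → Lint,
    f α = (δ.dias.filter fun p => decide (p.1 = α)).map sel ∧
    ∀ p ∈ δ.dias, p.1 = α →
      (∀ J, (α, J) ∈ δ.boxes →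
        ∃ j ∈ J, LitsConsistent (α.1 ++ p.2.1 ++ j.1) ∧
          (sel p).IsEquivOf (α.1 ++ p.2.1 ++ j.1)) ∧
      (α ∉ δ.boxes.map Prod.fst →
        LitsConsistent (α.1 ++ p.2.1) ∧ (sel p).IsEquivOf (α.1 ++ p.2.1)))

/-! ### Sizes -/

def PropForm.size : PropForm → ℕ
  | .atom i => i + 1
  | .neg φ => φ.size + 1
  | .and φ ψ => φ.size + ψ.size + 1
  | .or φ ψ => φ.size + ψ.size + 1

def Lint.size (α : Lint) : ℕ := (α.1.map fun p => p.1 + 1).sum + 1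

/-- `|φ|`, the number of symbols of `φ` (an occurrence of the atom `X_i`
contributing `i + 1` symbols). -/
def LForm.size : LForm → ℕ
  | .atom i => i + 1
  | .cond α β => α.size + β.size + 1
  | .neg φ => φ.size + 1
  | .and φ ψ => φ.size + ψ.size + 1
  | .or φ ψ => φ.size + ψ.size + 1

def PropForm.maxAtom : PropForm → ℕ
  | .atom i => i
  | .neg φ => φ.maxAtom
  | .and φ ψ => max φ.maxAtom ψ.maxAtom
  | .or φ ψ => max φ.maxAtom ψ.maxAtom

def Lint.maxAtom (α : Lint) : ℕ := (α.1.map Prod.fst).foldr max 0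

/-- `N`: the largest index of an atom occurring in `φ`. -/
def LForm.maxAtom : LForm → ℕ
  | .atom i => i
  | .cond α β => max α.maxAtom β.maxAtom
  | .neg φ => φ.maxAtom
  | .and φ ψ => max φ.maxAtom ψ.maxAtom
  | .or φ ψ => max φ.maxAtom ψ.maxAtom

/-- `S_φ`: the antecedents of the conditionals occurring in `φ`. -/
def LForm.ants : LForm → List Lint
  | .atom _ => []
  | .cond α _ => [α]
  | .neg φ => φ.ants
  | .and φ ψ => φ.ants ++ ψ.ants
  | .or φ ψ => φ.ants ++ ψ.ants

/-! ### The programming language `PL` -/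

/-- Assignment statements `X_i := c`, `X_i := X_j`, `X_i := !X_j`. -/
inductive BAssign : Type
  | const (i : ℕ) (c : Bool)
  | copy (i j : ℕ)
  | negcopy (i j : ℕ)
  deriving DecidableEq

def BAssign.target : BAssign → ℕ
  | .const i _ => i
  | .copy i _ => i
  | .negcopy i _ => i

def BAssign.maxVar : BAssign → ℕ
  | .const i _ => i
  | .copy i j => max i j
  | .negcopy i j => max i j

/-- Tests `X_i = c`, `X_i = X_j`, `X_i != X_j`, and conjunctions thereof. -/
inductive BTest : Type
  | eqc (i : ℕ) (c : Bool)
  | eqv (i j : ℕ)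
  | nev (i j : ℕ)
  | and (t₁ t₂ : BTest)
  deriving DecidableEq

def BTest.eval (s : ℕ → Bool) : BTest → Bool
  | .eqc i c => s i == c
  | .eqv i j => s i == s j
  | .nev i j => !(s i == s j)
  | .and t₁ t₂ => t₁.eval s && t₂.eval s

def BTest.size : BTest → ℕ
  | .eqc _ _ => 1
  | .eqv _ _ => 1
  | .nev _ _ => 1
  | .and t₁ t₂ => t₁.size + t₂.size + 1

/-- Programs of `PL`: the empty program, assignments, sequencing,
if-then-else, nondeterministic choice, and the unconditional infinite loop. -/
inductive Prog : Type
  | empty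
  | assign (a : BAssign)
  | seq (p q : Prog)
  | ite (c : BTest) (p q : Prog)
  | choose (ps : List Prog)
  | loop

mutual
  /-- The length of a program. -/
  def Prog.size : Prog → ℕ
    | .empty => 1
    | .assign _ => 1
    | .seq p q => p.size + q.size + 1
    | .ite c p q => c.size + p.size + q.size + 1
    | .choose ps => Prog.sizeList ps + 1
    | .loop => 1
  def Prog.sizeList : List Prog → ℕ
    | [] => 0
    | p :: ps => p.size + Prog.sizeList ps
end

/-- The effect of an assignment under an intervention: writes to intervened
variables are ignored. -/
def applyAssign (itv : ℕ → Option Bool) (a : BAssign) (s : ℕ → Bool) : ℕ → Bool :=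
  let v : Bool := match a with
    | .const _ c => c
    | .copy _ j => s j
    | .negcopy _ j => !(s j)
  if itv a.target = none then Function.update s a.target v else s

/-- Big-step semantics of `PL` under an intervention. A `loop`-statement has no
halting execution, and a `choose`-statement executes one of its branches. -/
inductive BigStep (itv : ℕ → Option Bool) : Prog → (ℕ → Bool) → (ℕ → Bool) → Prop
  | empty (s) : BigStep itv .empty s s
  | assign (a s) : BigStep itv (.assign a) s (applyAssign itv a s)
  | seq {p q s t u} : BigStep itv p s t → BigStep itv q t u → BigStep itv (.seq p q) s u
  | iteT {c p q s t} : c.eval s = true → BigStep itv p s t → BigStep itv (.ite c p q) s t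
  | iteF {c p q s t} : c.eval s = false → BigStep itv q s t → BigStep itv (.ite c p q) s t
  | choose {ps p s t} : p ∈ ps → BigStep itv p s t → BigStep itv (.choose ps) s t

/-- The set of result tapes of halting executions of the intervened program. -/
def ProgOutputs (P : Prog) (itv : ℕ → Option Bool) (x : ℕ → Bool) : Set (ℕ → Bool) :=
  {y | BigStep itv P (initTape itv x) y}

/-- Satisfaction `(T_P, x) ⊨ φ` for the machine compiled from the program `P`
(whose executions are those of `P`). -/
def ProgSat (P : Prog) (x : ℕ → Bool) (φ : LForm) : Prop :=
  SatGen (fun α => ProgOutputs P α.itv x) x φ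

end CausalSim
namespace CausalSim

/-! ### The canonical program fragment `PL†_{φ,C}` -/

def seqList : List Prog → Prog
  | [] => .empty
  | p :: ps => .seq p (seqList ps)

/-- Listing 1: `IsIntervened(X_i)` (with offset parameter `N`): performs the
toggle check for `X_i`, records the result in `X_{i+N}`, uses `X_{i+2N}` as a
temporary variable, and leaves `X_i` unchanged. -/
def isIntervened (N i : ℕ) : Prog :=
  seqList [
    .assign (.copy (i + N) i),
    .assign (.negcopy i i),
    .assign (.copy (i + 2 * N) i),
    .ite (.eqv (i + 2 * N) (i + N))
      (.assign (.const (i + N) true)) (.assign (.const (i + N) false)),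
    .assign (.negcopy i i)]

/-- One copy of `IsIntervened(X_i)` for each `1 ≤ i ≤ N`. -/
def isIntervenedAll (N : ℕ) : Prog :=
  seqList ((List.range' 1 N).map (isIntervened N))

/-- Listing 2: `HoldsFromIntervention(α)`: the condition checking that exactly
the variables occurring in `α` are marked as intervened and carry the values
specified by `α`'s literals. -/
def holdsFromItv (N : ℕ) (α : Lint) : BTest :=
  ((List.range' 1 N).map fun i =>
    match α.itv i with
    | some b => BTest.and (.eqc i b) (.eqc (i + N) true)
    | none => BTest.eqc (i + N) false).foldr .and (.eqv 0 0)

/-- A sequence of assignment statements. -/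
def assignSeq (l : List BAssign) : Prog := seqList (l.map Prog.assign)

/-- An admissible assignment sequence: assignments only to (pairwise distinct)
variables `X_i` with `1 ≤ i ≤ N`, mentioning only variables of index `≤ N`. -/
def GoodAssigns (N : ℕ) (l : List BAssign) : Prop :=
  (l.map BAssign.target).Nodup ∧ ∀ a ∈ l, a.maxVar ≤ N ∧ 1 ≤ a.target

/-- The admissible bodies of the `if`-statements of a fragment program:
(a) a `choose`-statement with at most `C·|φ|` branches, each an admissible
assignment sequence; (b) a single admissible assignment sequence; or
(c) a single `loop`-statement — with (a) excluded for the deterministic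
dialects and (c) excluded for the halting dialects. -/
def IfBody (C N sz : ℕ) (allowChoose allowLoop : Bool) (p : Prog) : Prop :=
  (allowChoose = true ∧ ∃ branches : List (List BAssign),
      p = .choose (branches.map assignSeq) ∧ branches.length ≤ C * sz ∧
      ∀ l ∈ branches, GoodAssigns N l) ∨
  (∃ l : List BAssign, p = assignSeq l ∧ GoodAssigns N l) ∨
  (allowLoop = true ∧ p = .loop)

/-- Membership in the fragment `PL†_{φ,C}`: one copy of `IsIntervened(X_i)` for
each `1 ≤ i ≤ N`, followed by at most one `if`-statement with condition
`HoldsFromIntervention(α)` for each antecedent `α` occurring in `φ`, with an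
admissible body. -/
def InFrag (C : ℕ) (φ : LForm) (allowChoose allowLoop : Bool) (P : Prog) : Prop :=
  ∃ ifs : List (Lint × Prog),
    (ifs.map Prod.fst).Nodup ∧
    (∀ q ∈ ifs, q.1 ∈ φ.ants ∧ IfBody C φ.maxAtom φ.size allowChoose allowLoop q.2) ∧
    P = .seq (isIntervenedAll φ.maxAtom)
      (seqList (ifs.map fun q => Prog.ite (holdsFromItv φ.maxAtom q.1) q.2 .empty))

/-! ### Encodings into binary strings -/

def encNat (n : ℕ) : List Bool := List.replicate n true ++ [false]

def encListGen (enc : α → List Bool) (l : List α) : List Bool :=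
  encNat l.length ++ l.flatMap enc

def encLit (p : ℕ × Bool) : List Bool := encNat p.1 ++ [p.2]

def encLint (α : Lint) : List Bool := encListGen encLit α.1

def encProp : PropForm → List Bool
  | .atom i => encNat 0 ++ encNat i
  | .neg φ => encNat 1 ++ encProp φ
  | .and φ ψ => encNat 2 ++ encProp φ ++ encProp ψ
  | .or φ ψ => encNat 3 ++ encProp φ ++ encProp ψ

/-- A standard encoding of `L`-formulas as binary strings. -/
def encLForm : LForm → List Bool
  | .atom i => encNat 0 ++ encNat i
  | .cond α β => encNat 1 ++ encLint α ++ encProp β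
  | .neg φ => encNat 2 ++ encLForm φ
  | .and φ ψ => encNat 3 ++ encLForm φ ++ encLForm ψ
  | .or φ ψ => encNat 4 ++ encLForm φ ++ encLForm ψ

def encAssign : BAssign → List Bool
  | .const i c => encNat 0 ++ encNat i ++ [c]
  | .copy i j => encNat 1 ++ encNat i ++ encNat j
  | .negcopy i j => encNat 2 ++ encNat i ++ encNat j

def encTest : BTest → List Bool
  | .eqc i c => encNat 0 ++ encNat i ++ [c]
  | .eqv i j => encNat 1 ++ encNat i ++ encNat j
  | .nev i j => encNat 2 ++ encNat i ++ encNat j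
  | .and t₁ t₂ => encNat 3 ++ encTest t₁ ++ encTest t₂

mutual
  /-- A standard encoding of programs as binary strings. -/
  def encProg : Prog → List Bool
    | .empty => encNat 0
    | .assign a => encNat 1 ++ encAssign a
    | .seq p q => encNat 2 ++ encProg p ++ encProg q
    | .ite c p q => encNat 3 ++ encTest c ++ encProg p ++ encProg q
    | .choose ps => encNat 4 ++ encNat ps.length ++ encProgList ps
    | .loop => encNat 5
  def encProgList : List Prog → List Bool
    | [] => []
    | p :: ps => encProg p ++ encProgList ps
end

/-! ### Polynomial time, NP, and NP-completeness -/

/-- The identity finite encoding of binary strings. -/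
def listBoolFinEncoding : Computability.Encoding (List Bool) Bool where
  encode := id
  decode := fun l => some l
  decode_encode := fun _ => rfl

/-- `f` is computable in polynomial time (by a Turing machine). -/
def PolyTimeFun (f : List Bool → List Bool) : Prop :=
  Nonempty (Turing.TM2ComputableInPolyTime listBoolFinEncoding.encode listBoolFinEncoding.encode f)

/-- Polynomial-time many-one reducibility. -/
def PolyReducible (L₁ L₂ : List Bool → Prop) : Prop :=
  ∃ f : List Bool → List Bool, PolyTimeFun f ∧ ∀ s, L₁ s ↔ L₂ (f s)

/-- A self-delimiting pairing of binary strings. -/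
def encPairStr (a b : List Bool) : List Bool := encNat a.length ++ a ++ b

/-- The class NP, via polynomial-time verifiers of polynomial-length certificates. -/
def InNP (L : List Bool → Prop) : Prop :=
  ∃ (V : List Bool → Bool) (p : Polynomial ℕ),
    PolyTimeFun (fun s => [V s]) ∧
    ∀ s, L s ↔ ∃ w : List Bool, w.length ≤ p.eval s.length ∧ V (encPairStr s w) = true

/-- NP-completeness with respect to polynomial-time many-one reductions. -/
def NPComplete (L : List Bool → Prop) : Prop :=
  InNP L ∧ ∀ L' : List Bool → Prop, InNP L' → PolyReducible L' L

/-- The language Sim-Sat for a class of models: encodings of `L`-formulas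
satisfied by some model in the class. -/
def SimSatLang (cls : CSM → Prop) : List Bool → Prop :=
  fun s => ∃ φ : LForm, s = encLForm φ ∧ ∃ M : CSM, cls M ∧ M.Sat φ

/-! ### Miscellaneous helpers -/

/-- The state description with support the list `xs`. -/
def stateOf (xs : List ℕ) : ℕ → Bool := fun i => decide (i ∈ xs)

theorem finSupp_stateOf (xs : List ℕ) : FinSupp (stateOf xs) := by
  apply Set.Finite.subset (List.finite_toSet xs)
  intro i hi
  simpa [stateOf] using hi

/-- The model given by a machine and (the support of) a state description. -/
def csmOf (T : Machine) (xs : List ℕ) : CSM := ⟨T, stateOf xs, finSupp_stateOf xs⟩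

/-- The singleton intervention `X_n := 1`. -/
def lintSingle (n : ℕ) : Lint := ⟨[(n, true)], List.isChain_singleton _⟩

/-- The set `Ω` of the non-compactness proposition, for `f : ℕ → ℕ`. -/
def Omega (f : ℕ → ℕ) : Set LForm :=
  {ψ | ∃ n, ψ = LForm.neg (.atom n)} ∪
  {ψ | ∃ n, ψ = LForm.dia (lintSingle n) (.atom (f n))} ∪
  {ψ | ∃ n m, m ≠ n ∧ m ≠ f n ∧ ψ = LForm.cond (lintSingle n) (.neg (.atom m))}

end CausalSim

namespace CausalSim

/-!
If `¬φ` is not derivable, some valuation `(v, w)` of the atoms `X ∪ L_cond` satisfies `φ` and is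
coherent: whenever `w` makes a conditional `[α]β` of `φ` false, some tape satisfies `α`, `¬β` and
every `β'` such that `[α]β'` occurs in `φ` and is true under `w`. Otherwise `α ∧ β'₁ ∧ ⋯ ∧ β'ₖ ⊨ β`,
and then `R`, `RW` and `K` derive the clause `[α]β'₁ → ⋯ → [α]β'ₖ → [α]β`, which `w` falsifies.

A coherent valuation is realized by a machine that nondeterministically picks a conditional
`[α]β` of `φ` false under `w`, finds out which of the variables `X_0, …, X_N` of `φ` are
intervened on by toggling each of them and reading it back, diverges unless the intervention
is `α`, and otherwise writes the witness tape of `[α]β`. Under the intervention `α` the halting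
outputs are exactly these witnesses, so `[α]β` holds in the model iff `w` makes it true.
-/

theorem PropForm.evalA_toL (v : ℕ → Bool) (w : Lint → PropForm → Bool) (β : PropForm) :
    β.toL.evalA v w = β.eval v := by
  induction β <;> simp_all [PropForm.toL, LForm.evalA, PropForm.eval]

theorem PropForm.eval_congr {v v' : ℕ → Bool} (β : PropForm)
    (h : ∀ i ≤ β.maxAtom, v i = v' i) : β.eval v = β.eval v' := by
  induction β with
  | atom i => exact h i le_rfl
  | neg β ih => simp [PropForm.eval, ih h]
  | and β γ ihβ ihγ | or β γ ihβ ihγ =>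
    simp only [PropForm.maxAtom] at h
    simp [PropForm.eval, ihβ fun i hi => h i (le_max_of_le_left hi),
      ihγ fun i hi => h i (le_max_of_le_right hi)]

theorem find?_map_snd_eq_some_iff {l : List (ℕ × Bool)} (hl : l.Pairwise fun p q => p.1 < q.1)
    {i : ℕ} {b : Bool} : (l.find? fun p => p.1 == i).map Prod.snd = some b ↔ (i, b) ∈ l := by
  induction hl with
  | nil => simp
  | @cons p l hp _ ih =>
    by_cases hpi : p.1 = i
    · subst hpi
      have : (p.1, b) ∉ l := fun h => lt_irrefl _ (hp (p.1, b) h)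
      aesop
    · have hne : (i, b) ≠ p := fun h => hpi (congrArg Prod.fst h).symm
      rw [List.find?_cons_of_neg (by simpa using hpi), ih, List.mem_cons]
      simp [hne]

namespace Lint

theorem pairwise (α : Lint) : α.1.Pairwise fun p q => p.1 < q.1 :=
  List.isChain_iff_pairwise.mp α.2

theorem itv_eq_some_iff {α : Lint} {i : ℕ} {b : Bool} : α.itv i = some b ↔ (i, b) ∈ α.1 :=
  find?_map_snd_eq_some_iff (Lint.pairwise α)

theorem le_maxAtom_of_itv_eq_some {α : Lint} {i : ℕ} {b : Bool} (h : α.itv i = some b) :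
    i ≤ α.maxAtom :=
  List.le_max_of_le' 0 (List.mem_map.mpr ⟨_, itv_eq_some_iff.mp h, rfl⟩) le_rfl

theorem nodup (α : Lint) : α.1.Nodup :=
  (Lint.pairwise α).imp fun {p q} (h : p.1 < q.1) (heq : p = q) => lt_irrefl _ (heq ▸ h)

theorem ext_of_itv {α γ : Lint} (h : ∀ i, α.itv i = γ.itv i) : α = γ := by
  have hmem : ∀ p, p ∈ α.1 ↔ p ∈ γ.1 := fun ⟨i, b⟩ => by
    rw [← itv_eq_some_iff, ← itv_eq_some_iff, h]
  refine Subtype.ext <| List.Perm.eq_of_pairwise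
    (fun _ _ _ _ h₁ h₂ => absurd (h₁.trans h₂) (lt_irrefl _)) (Lint.pairwise α) (Lint.pairwise γ) ?_
  exact (List.perm_ext_iff_of_nodup (nodup α) (nodup γ)).mpr hmem

theorem eq_of_itv_eq_on {N : ℕ} {α γ : Lint} (hα : α.maxAtom ≤ N) (hγ : γ.maxAtom ≤ N)
    (h : ∀ i ≤ N, α.itv i = γ.itv i) : α = γ := by
  refine ext_of_itv fun i => ?_
  by_cases hi : i ≤ N
  · exact h i hi
  · have none_of_lt : ∀ δ : Lint, δ.maxAtom ≤ N → δ.itv i = none := fun δ hδ =>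
      Option.eq_none_iff_forall_ne_some.mpr fun b hb =>
        hi (hδ.trans' (le_maxAtom_of_itv_eq_some hb))
    rw [none_of_lt α hα, none_of_lt γ hγ]

theorem eval_toProp_iff {α : Lint} {y : ℕ → Bool} :
    α.toProp.eval y = true ↔ ∀ i b, α.itv i = some b → y i = b := by
  simp only [itv_eq_some_iff, ← Prod.forall (p := fun q => q ∈ α.1 → y q.1 = q.2)]
  have eval_lit : ∀ p, (PropForm.lit p).eval y = true ↔ y p.1 = p.2 := fun ⟨i, b⟩ => by
    cases b <;> simp [PropForm.lit, PropForm.eval]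
  have eval_foldl : ∀ (l : List (ℕ × Bool)) (acc : PropForm),
      (l.foldl (fun acc q => .and acc (.lit q)) acc).eval y = true ↔
        acc.eval y = true ∧ ∀ p ∈ l, y p.1 = p.2 := by
    intro l
    induction l with
    | nil => simp
    | cons q l ih => simp [ih, PropForm.eval, eval_lit, and_assoc]
  obtain ⟨_ | ⟨p, l⟩, _⟩ := α
  · simp [Lint.toProp, PropForm.top, PropForm.bot, PropForm.eval]
  · simp [Lint.toProp, eval_foldl, eval_lit]

end Lint

theorem PropForm.eval_foldr_imp (y : ℕ → Bool) (S : List PropForm) (β : PropForm) :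
    (S.foldr PropForm.imp β).eval y = true ↔ ((∀ s ∈ S, s.eval y = true) → β.eval y = true) := by
  induction S with
  | nil => simp
  | cons s S ih => cases hs : s.eval y <;> simp [PropForm.imp, PropForm.eval, hs, ih]

theorem LForm.evalA_foldr_imp (v : ℕ → Bool) (w : Lint → PropForm → Bool) (Cs : List LForm)
    (ψ : LForm) :
    (Cs.foldr LForm.imp ψ).evalA v w = true ↔
      ((∀ C ∈ Cs, C.evalA v w = true) → ψ.evalA v w = true) := by
  induction Cs with
  | nil => simp
  | cons C Cs ih => cases hC : C.evalA v w <;> simp [LForm.imp, LForm.evalA, hC, ih]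

def condClause (α : Lint) (S : List PropForm) (β : PropForm) : LForm :=
  (S.map (LForm.cond α)).foldr LForm.imp (.cond α β)

theorem evalA_condClause (v : ℕ → Bool) (w : Lint → PropForm → Bool) (α : Lint)
    (S : List PropForm) (β : PropForm) :
    (condClause α S β).evalA v w = true ↔ ((∀ s ∈ S, w α s = true) → w α β = true) := by
  simp [condClause, LForm.evalA_foldr_imp, LForm.evalA]

def Entails (α : Lint) (S : List PropForm) (β : PropForm) : Prop :=
  ∀ y, α.toProp.eval y = true → (∀ s ∈ S, s.eval y = true) → β.eval y = true

namespace Deriv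

variable {E : LForm → Prop}

theorem of_forall_evalA {Cs : List LForm} {ψ : LForm} (hCs : ∀ C ∈ Cs, Deriv E C)
    (h : ∀ v w, (∀ C ∈ Cs, C.evalA v w = true) → ψ.evalA v w = true) : Deriv E ψ := by
  induction Cs generalizing ψ with
  | nil => exact .taut fun v w => h v w (by simp)
  | cons C Cs ih =>
    refine .mp (ih (fun C' hC' => hCs C' (by simp [hC'])) fun v w hCs' => ?_) (hCs C (by simp))
    cases hC : C.evalA v w <;> simp_all [LForm.imp, LForm.evalA]

theorem cond_of_forall {α : Lint} {τ : PropForm}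
    (h : ∀ y, α.toProp.eval y = true → τ.eval y = true) : Deriv E (.cond α τ) := by
  refine .mp (.rw α (.taut fun v w => ?_)) (.axR α)
  cases hα : α.toProp.eval v <;>
    simp [PropForm.imp, PropForm.toL, LForm.evalA, PropForm.evalA_toL, hα, h v]

theorem cond_imp_condClause (α : Lint) (S : List PropForm) (β : PropForm) :
    Deriv E ((LForm.cond α (S.foldr PropForm.imp β)).imp (condClause α S β)) := by
  induction S with
  | nil =>
    exact .taut fun v w => by cases h : w α β <;> simp [condClause, LForm.imp, LForm.evalA, h]
  | cons s S ih =>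
    have hK := axK (extra := E) α s (S.foldr PropForm.imp β)
    refine of_forall_evalA (Cs := [_, _]) (by simpa using ⟨hK, ih⟩) fun v w h => ?_
    simp only [List.mem_cons, List.not_mem_nil, or_false, forall_eq_or_imp, forall_eq] at h
    simp only [condClause, LForm.imp, LForm.evalA, List.map_cons, List.foldr_cons,
      Bool.or_eq_true, Bool.not_eq_true'] at h ⊢
    grind

theorem condClause_of_entails {α : Lint} {S : List PropForm} {β : PropForm}
    (h : Entails α S β) : Deriv E (condClause α S β) :=
  .mp (cond_imp_condClause α S β) <| cond_of_forall fun y hy =>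
    (PropForm.eval_foldr_imp y S β).mpr (h y hy)

end Deriv

def LForm.conds : LForm → List (Lint × PropForm)
  | .atom _ => []
  | .cond α β => [(α, β)]
  | .neg φ => φ.conds
  | .and φ ψ | .or φ ψ => φ.conds ++ ψ.conds

theorem LForm.maxAtom_le_of_mem_conds {φ : LForm} {p : Lint × PropForm} (hp : p ∈ φ.conds) :
    p.1.maxAtom ≤ φ.maxAtom ∧ p.2.maxAtom ≤ φ.maxAtom := by
  induction φ with
  | atom => cases hp
  | cond α β =>
    obtain rfl := List.mem_singleton.mp hp
    exact ⟨le_max_left _ _, le_max_right _ _⟩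
  | neg φ ih => exact ih hp
  | and φ ψ ihφ ihψ | or φ ψ ihφ ihψ =>
    rcases List.mem_append.mp hp with h | h
    · exact (ihφ h).imp (le_max_of_le_left ·) (le_max_of_le_left ·)
    · exact (ihψ h).imp (le_max_of_le_right ·) (le_max_of_le_right ·)

theorem satGen_iff_evalA {O : Lint → Set (ℕ → Bool)} {x v : ℕ → Bool}
    {w : Lint → PropForm → Bool} (ψ : LForm) (hx : ∀ i ≤ ψ.maxAtom, x i = v i)
    (hO : ∀ p ∈ ψ.conds, (∀ y ∈ O p.1, p.2.eval y = true) ↔ w p.1 p.2 = true) :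
    SatGen O x ψ ↔ ψ.evalA v w = true := by
  induction ψ with
  | atom i => simp [SatGen, LForm.evalA, hx i le_rfl]
  | cond α β => exact hO (α, β) (List.mem_singleton_self _)
  | neg φ ih => simp [SatGen, LForm.evalA, ih hx hO]
  | and φ ψ ihφ ihψ | or φ ψ ihφ ihψ =>
    simp only [LForm.maxAtom, LForm.conds, List.mem_append] at hx hO
    simp [SatGen, LForm.evalA,
      ihφ (fun i hi => hx i (le_max_of_le_left hi)) (fun p hp => hO p (.inl hp)),
      ihψ (fun i hi => hx i (le_max_of_le_right hi)) (fun p hp => hO p (.inr hp))]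

/-- `y` shows that `[α]β`, for `p = (α, β)`, can fail while the conditionals `[α]β'` of `φ` that
are true under `w` hold. -/
def Refutes (φ : LForm) (w : Lint → PropForm → Bool) (p : Lint × PropForm) (y : ℕ → Bool) :
    Prop :=
  p.1.toProp.eval y = true ∧
    (∀ q ∈ φ.conds, q.1 = p.1 → w q.1 q.2 = true → q.2.eval y = true) ∧ p.2.eval y = false

open Classical in
noncomputable def condClauses (φ : LForm) : List LForm :=
  φ.conds.flatMap fun p =>
    (((φ.conds.map Prod.snd).sublists.filter fun S => Entails p.1 S p.2).map
      fun S => condClause p.1 S p.2)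

theorem exists_refutes_of_not_AX_neg {φ : LForm} (h : ¬ AX (.neg φ)) :
    ∃ v w, φ.evalA v w = true ∧
      ∀ p ∈ φ.conds, w p.1 p.2 = false → ∃ y, Refutes φ w p y := by
  by_contra! hno
  refine h (Deriv.of_forall_evalA (Cs := condClauses φ) ?_ fun v w hCs => ?_)
  · intro C hC
    simp only [condClauses, List.mem_flatMap, List.mem_map, List.mem_filter,
      decide_eq_true_eq] at hC
    obtain ⟨p, -, S, ⟨-, hS⟩, rfl⟩ := hC
    exact Deriv.condClause_of_entails hS
  · cases hφ : φ.evalA v w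
    · simp [LForm.evalA, hφ]
    obtain ⟨p, hp, hwp, hnot⟩ := hno v w hφ
    set S := ((φ.conds.filter fun q => q.1 = p.1 ∧ w q.1 q.2 = true).map Prod.snd) with hS
    have hSw : ∀ s ∈ S, w p.1 s = true := by
      simp only [hS, List.mem_map, List.mem_filter, decide_eq_true_eq]
      rintro _ ⟨q, ⟨-, hq1, hqw⟩, rfl⟩
      exact hq1 ▸ hqw
    have hent : Entails p.1 S p.2 := by
      intro y hy hSy
      by_contra hβ
      refine hnot y ⟨hy, fun q hq hq1 hqw => hSy q.2 ?_, by simpa using hβ⟩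
      simp only [hS, List.mem_map, List.mem_filter, decide_eq_true_eq]
      exact ⟨q, ⟨hq, hq1, hqw⟩, rfl⟩
    have hmem : condClause p.1 S p.2 ∈ condClauses φ := by
      simp only [condClauses, List.mem_flatMap, List.mem_map, List.mem_filter,
        decide_eq_true_eq, List.mem_sublists]
      exact ⟨p, hp, S, ⟨List.filter_sublist.map _, hent⟩, rfl⟩
    have := (evalA_condClause v w p.1 S p.2).mp (hCs _ hmem) hSw
    simp [this] at hwp

structure ACfg (σ : Type*) where
  q : σ
  pos : ℕ
  tape : ℕ → Bool

/-- A transition function: `δ s a` lists the moves `(s', written bit, moveRight)` available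
in control state `s` when reading `a`. -/
abbrev Transition (σ : Type*) : Type _ := σ → Bool → List (σ × Bool × Bool)

section Compile

variable {σ : Type*} {δ : Transition σ} {code : σ → ℕ} {ctls : List σ}
  {itv : ℕ → Option Bool}

def ACfg.toCfg (code : σ → ℕ) (c : ACfg σ) : Cfg := ⟨code c.q, c.pos, c.tape⟩

def ACfg.Step (δ : Transition σ) (itv : ℕ → Option Bool) (c c' : ACfg σ) : Prop :=
  ∃ o ∈ δ c.q (c.tape c.pos), c' = ⟨o.1, movePos c.pos o.2.2, writeTape itv c.tape c.pos o.2.1⟩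

/-- The machine running `δ` on the control states `ctls`, the state `s` being numbered `code s`. -/
def compile (code : σ → ℕ) (ctls : List σ) (δ : Transition σ) : Machine :=
  ctls.flatMap fun s => [false, true].flatMap fun a =>
    (δ s a).map fun o => ((code s, a), (code o.1, o.2))

theorem mem_compile {r : Rule} :
    r ∈ compile code ctls δ ↔
      ∃ s ∈ ctls, ∃ a, ∃ o ∈ δ s a, r = ((code s, a), (code o.1, o.2)) := by
  simp only [compile, List.mem_flatMap, List.mem_map, List.mem_cons, List.not_mem_nil,
    or_false]
  constructor
  · rintro ⟨s, hs, a, -, o, ho, rfl⟩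
    exact ⟨s, hs, a, o, ho, rfl⟩
  · rintro ⟨s, hs, a, o, ho, rfl⟩
    exact ⟨s, hs, a, by cases a <;> simp, o, ho, rfl⟩

variable (hcode : code.Injective) (hctls : ∀ s a, δ s a ≠ [] → s ∈ ctls)
include hcode hctls

theorem mstep_compile_iff {c : ACfg σ} {c' : Cfg} :
    MStep (compile code ctls δ) itv (c.toCfg code) c' ↔
      ∃ d, ACfg.Step δ itv c d ∧ c' = d.toCfg code := by
  constructor
  · rintro ⟨r, hr, hr1, rfl⟩
    obtain ⟨s, -, a, o, ho, rfl⟩ := mem_compile.mp hr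
    obtain ⟨hs, rfl⟩ := Prod.mk.inj hr1
    obtain rfl := hcode hs
    exact ⟨_, ⟨o, ho, rfl⟩, rfl⟩
  · rintro ⟨d, ⟨o, ho, rfl⟩, rfl⟩
    have hq : c.q ∈ ctls := hctls _ _ (List.ne_nil_of_mem ho)
    exact ⟨_, mem_compile.mpr ⟨c.q, hq, _, o, ho, rfl⟩, rfl, rfl⟩

theorem halted_compile_iff {c : ACfg σ} :
    Halted (compile code ctls δ) (c.toCfg code) ↔ δ c.q (c.tape c.pos) = [] := by
  constructor
  · intro h
    refine List.eq_nil_iff_forall_not_mem.mpr fun o ho => ?_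
    exact h _ (mem_compile.mpr ⟨c.q, hctls _ _ (List.ne_nil_of_mem ho), _, o, ho, rfl⟩) rfl
  · intro h r hr hr1
    obtain ⟨s, -, a, o, ho, rfl⟩ := mem_compile.mp hr
    obtain ⟨hs, rfl⟩ := Prod.mk.inj hr1
    obtain rfl := hcode hs
    simp [ACfg.toCfg, h] at ho

theorem reflTransGen_compile_iff {c : ACfg σ} {c' : Cfg} :
    Relation.ReflTransGen (MStep (compile code ctls δ) itv) (c.toCfg code) c' ↔
      ∃ d, Relation.ReflTransGen (ACfg.Step δ itv) c d ∧ c' = d.toCfg code := by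
  constructor
  · intro h
    induction h with
    | refl => exact ⟨c, .refl, rfl⟩
    | tail _ hstep ih =>
      obtain ⟨d, hd, rfl⟩ := ih
      obtain ⟨e, he, rfl⟩ := (mstep_compile_iff hcode hctls).mp hstep
      exact ⟨e, hd.tail he, rfl⟩
  · rintro ⟨d, h, rfl⟩
    induction h with
    | refl => exact .refl
    | tail _ hstep ih => exact ih.tail ((mstep_compile_iff hcode hctls).mpr ⟨_, hstep, rfl⟩)

theorem outputs_compile {s₀ : σ} (h₀ : code s₀ = 0) (x : ℕ → Bool) :
    Outputs (compile code ctls δ) itv x =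
      {y | ∃ c, Relation.ReflTransGen (ACfg.Step δ itv) ⟨s₀, 0, initTape itv x⟩ c ∧
        δ c.q (c.tape c.pos) = [] ∧ c.tape = y} := by
  ext y
  have hinit : (⟨0, 0, initTape itv x⟩ : Cfg) = ACfg.toCfg code ⟨s₀, 0, initTape itv x⟩ := by
    simp [ACfg.toCfg, h₀]
  simp only [Outputs, Set.mem_ofPred_eq, hinit, reflTransGen_compile_iff hcode hctls]
  constructor
  · rintro ⟨_, ⟨d, hd, rfl⟩, hh, rfl⟩
    exact ⟨d, hd, (halted_compile_iff hcode hctls).mp hh, rfl⟩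
  · rintro ⟨d, hd, hh, rfl⟩
    exact ⟨_, ⟨d, hd, rfl⟩, (halted_compile_iff hcode hctls).mpr hh, rfl⟩

end Compile

/-- A branch of the canonical machine accepts the interventions with signature `sig` on the
scanned variables, and writes `wit` on the scanned variables that are not intervened on. -/
structure Branch where
  sig : ℕ → Option Bool
  wit : ℕ → Bool
  deriving Inhabited

inductive Ctl : Type
  | start
  | loop
  | scan (j i : ℕ)
  | bounce (j i : ℕ) (c : Bool)
  | check (j i : ℕ) (c : Bool)
  deriving Encodable

def Ctl.code : Ctl → ℕ
  | .start => 0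
  | s => Encodable.encode s + 1

theorem Ctl.code_injective : Ctl.code.Injective := by
  intro s t h
  cases s <;> cases t <;>
    first | rfl | exact Encodable.encode_injective (Nat.succ_injective h) | simp [Ctl.code] at h

/-- From `start` the machine diverges or picks a branch `j`, which scans `X_0, …, X_N`. In
`scan j i` it reads `c`, writes `¬c` and steps right; `bounce` steps back, and `check` reads `X_i`
again: the write was ignored iff `X_i` is intervened on. A branch whose signature disagrees with
this diverges in `loop`. -/
def canonStep (N : ℕ) (bs : List Branch) : Transition Ctl
  | .start, a => (.loop, a, true) :: (List.range bs.length).map fun j => (.scan j 0, a, false)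
  | .loop, a => [(.loop, a, true)]
  | .scan j i, a => if j < bs.length ∧ i ≤ N then [(.bounce j i a, !a, true)] else []
  | .bounce j i c, a => if j < bs.length ∧ i ≤ N then [(.check j i c, a, false)] else []
  | .check j i c, a =>
    if j < bs.length ∧ i ≤ N then
      if (bs.getD j default).sig i = (if a = c then some a else none) then
        [(.scan j (i + 1), (bs.getD j default).wit i, true)]
      else [(.loop, a, true)]
    else []

def canonCtls (N n : ℕ) : List Ctl :=
  .start :: .loop :: (List.range n).flatMap fun j => (List.range (N + 1)).flatMap fun i =>
    [.scan j i, .bounce j i false, .bounce j i true, .check j i false, .check j i true]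

theorem mem_canonCtls_of_canonStep_ne_nil {N : ℕ} {bs : List Branch} {s : Ctl} {a : Bool}
    (h : canonStep N bs s a ≠ []) : s ∈ canonCtls N bs.length := by
  cases s with
  | start | loop => simp [canonCtls]
  | scan j i | bounce j i c | check j i c =>
    simp only [canonStep, ne_eq, ite_eq_right_iff, Classical.not_imp] at h
    refine List.mem_cons_of_mem _ <| List.mem_cons_of_mem _ <| List.mem_flatMap.mpr
      ⟨j, List.mem_range.mpr h.1.1, List.mem_flatMap.mpr ⟨i, by grind, ?_⟩⟩
    simp

def canonMachine (N : ℕ) (bs : List Branch) : Machine :=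
  compile Ctl.code (canonCtls N bs.length) (canonStep N bs)

section Tapes

variable {itv : ℕ → Option Bool}

theorem writeTape_self (t : ℕ → Bool) (p : ℕ) : writeTape itv t p (t p) = t := by
  unfold writeTape
  split_ifs <;> simp

theorem writeTape_writeTape (t : ℕ → Bool) (p : ℕ) (a b : Bool) :
    writeTape itv (writeTape itv t p a) p b = writeTape itv t p b := by
  unfold writeTape
  split_ifs <;> simp

end Tapes

/-- The tape of a branch that has scanned `X_0, …, X_{i-1}`. -/
def scanTape (itv : ℕ → Option Bool) (x : ℕ → Bool) (b : Branch) (i : ℕ) : ℕ → Bool :=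
  fun m => if m < i ∧ itv m = none then b.wit m else initTape itv x m

/-- The tape of a branch scanning `X_i`, just after it toggled `X_i`. -/
def probeTape (itv : ℕ → Option Bool) (x : ℕ → Bool) (b : Branch) (i : ℕ) : ℕ → Bool :=
  writeTape itv (scanTape itv x b i) i (!initTape itv x i)

def Branch.Matches (N : ℕ) (itv : ℕ → Option Bool) (b : Branch) : Prop :=
  ∀ i ≤ N, b.sig i = itv i

section ScanTape

variable {itv : ℕ → Option Bool} {x : ℕ → Bool} {b : Branch}

theorem scanTape_zero : scanTape itv x b 0 = initTape itv x := by
  funext m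
  simp [scanTape]

theorem scanTape_self (i : ℕ) : scanTape itv x b i i = initTape itv x i := by
  simp [scanTape]

theorem scanTape_succ (i : ℕ) :
    scanTape itv x b (i + 1) = writeTape itv (scanTape itv x b i) i (b.wit i) := by
  funext m
  by_cases hm : m = i
  · subst hm
    unfold writeTape scanTape
    split_ifs <;> simp_all
  · have hlt : m < i + 1 ↔ m < i := by omega
    unfold writeTape
    split_ifs <;> simp [scanTape, hlt, Function.update_of_ne hm]

theorem probeTape_detects_intervention (i : ℕ) :
    (if probeTape itv x b i i = initTape itv x i then some (probeTape itv x b i i) else none) =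
      itv i := by
  cases h : itv i <;> simp [probeTape, writeTape, scanTape, initTape, h]

end ScanTape

inductive CanonInv (N : ℕ) (bs : List Branch) (itv : ℕ → Option Bool) (x : ℕ → Bool) :
    ACfg Ctl → Prop
  | start : CanonInv N bs itv x ⟨.start, 0, initTape itv x⟩
  | loop (p : ℕ) (t : ℕ → Bool) : CanonInv N bs itv x ⟨.loop, p, t⟩
  | scan {j i : ℕ} {b : Branch} : bs[j]? = some b → i ≤ N + 1 → (∀ m < i, b.sig m = itv m) →
      CanonInv N bs itv x ⟨.scan j i, i, scanTape itv x b i⟩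
  | bounce {j i : ℕ} {b : Branch} : bs[j]? = some b → i ≤ N → (∀ m < i, b.sig m = itv m) →
      CanonInv N bs itv x ⟨.bounce j i (initTape itv x i), i + 1, probeTape itv x b i⟩
  | check {j i : ℕ} {b : Branch} : bs[j]? = some b → i ≤ N → (∀ m < i, b.sig m = itv m) →
      CanonInv N bs itv x ⟨.check j i (initTape itv x i), i, probeTape itv x b i⟩

namespace CanonInv

variable {N : ℕ} {bs : List Branch} {itv : ℕ → Option Bool} {x : ℕ → Bool} {c d : ACfg Ctl}

theorem step (hc : CanonInv N bs itv x c) (hs : ACfg.Step (canonStep N bs) itv c d) :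
    CanonInv N bs itv x d := by
  obtain ⟨o, ho, rfl⟩ := hs
  cases hc with
  | start =>
    simp only [canonStep, List.mem_cons, List.mem_map, List.mem_range] at ho
    rcases ho with rfl | ⟨j, hj, rfl⟩
    · exact .loop _ _
    · simpa [movePos, writeTape_self, scanTape_zero] using
        scan (List.getElem?_eq_getElem hj) (Nat.zero_le _) (by simp)
  | loop p t =>
    simp only [canonStep, List.mem_singleton] at ho
    exact ho ▸ .loop _ _
  | @scan j i b hb hi hm =>
    have hj := (List.getElem?_eq_some_iff.mp hb).1
    by_cases hiN : i ≤ N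
    · simp only [canonStep, hj, hiN, and_self, ite_true, List.mem_singleton] at ho
      subst ho
      simpa [scanTape_self, movePos, probeTape] using bounce hb hiN hm
    · simp [canonStep, hiN] at ho
  | @bounce j i b hb hi hm =>
    have hj := (List.getElem?_eq_some_iff.mp hb).1
    simp only [canonStep, hj, hi, and_self, ite_true, List.mem_singleton] at ho
    subst ho
    simpa [writeTape_self, movePos] using check hb hi hm
  | @check j i b hb hi hm =>
    have hj := (List.getElem?_eq_some_iff.mp hb).1
    simp only [canonStep, hj, hi, and_self, ite_true, List.getD_eq_getElem?_getD, hb,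
      Option.getD_some, probeTape_detects_intervention] at ho
    split_ifs at ho with hsig
    · rw [List.mem_singleton] at ho
      subst ho
      have hm' : ∀ m < i + 1, b.sig m = itv m := fun m hm'' =>
        (Nat.lt_succ_iff_lt_or_eq.mp hm'').elim (hm m) (· ▸ hsig)
      simpa [movePos, probeTape, writeTape_writeTape, scanTape_succ] using
        scan hb (by omega) hm'
    · rw [List.mem_singleton] at ho
      exact ho ▸ .loop _ _

theorem of_reflTransGen
    (h : Relation.ReflTransGen (ACfg.Step (canonStep N bs) itv) ⟨.start, 0, initTape itv x⟩ c) :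
    CanonInv N bs itv x c := by
  induction h with
  | refl => exact .start
  | tail _ hs ih => exact ih.step hs

theorem exists_matches_of_halted (hc : CanonInv N bs itv x c)
    (hh : canonStep N bs c.q (c.tape c.pos) = []) :
    ∃ b ∈ bs, b.Matches N itv ∧ c.tape = scanTape itv x b (N + 1) := by
  cases hc with
  | start | loop => simp [canonStep] at hh
  | @scan j i b hb hi hm =>
    have hj := (List.getElem?_eq_some_iff.mp hb).1
    have hiN : i = N + 1 := by
      by_contra hne
      simp [canonStep, hj, show i ≤ N by omega] at hh
    subst hiN
    exact ⟨b, List.mem_of_getElem? hb, fun m hm' => hm m (by omega), rfl⟩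
  | @bounce j i b hb hi _ =>
    simp [canonStep, (List.getElem?_eq_some_iff.mp hb).1, hi] at hh
  | @check j i b hb hi _ =>
    simp only [canonStep, (List.getElem?_eq_some_iff.mp hb).1, hi, and_self, ite_true] at hh
    split_ifs at hh

end CanonInv

section Run

variable {N : ℕ} {bs : List Branch} {itv : ℕ → Option Bool} {x : ℕ → Bool} {j : ℕ}
  {b : Branch}

theorem canonStep_scan_reaches_succ (hb : bs[j]? = some b) {i : ℕ} (hi : i ≤ N)
    (hsig : b.sig i = itv i) :
    Relation.ReflTransGen (ACfg.Step (canonStep N bs) itv)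
      ⟨.scan j i, i, scanTape itv x b i⟩ ⟨.scan j (i + 1), i + 1, scanTape itv x b (i + 1)⟩ := by
  obtain ⟨hj, hbj⟩ := List.getElem?_eq_some_iff.mp hb
  have h₁ : ACfg.Step (canonStep N bs) itv ⟨.scan j i, i, scanTape itv x b i⟩
      ⟨.bounce j i (initTape itv x i), i + 1, probeTape itv x b i⟩ :=
    ⟨(.bounce j i (initTape itv x i), !initTape itv x i, true),
      by simp [canonStep, hj, hi, scanTape_self], by simp [movePos, probeTape]⟩
  have h₂ : ACfg.Step (canonStep N bs) itv
      ⟨.bounce j i (initTape itv x i), i + 1, probeTape itv x b i⟩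
      ⟨.check j i (initTape itv x i), i, probeTape itv x b i⟩ :=
    ⟨(.check j i (initTape itv x i), probeTape itv x b i (i + 1), false),
      by simp [canonStep, hj, hi], by simp [movePos, writeTape_self]⟩
  have h₃ : ACfg.Step (canonStep N bs) itv ⟨.check j i (initTape itv x i), i, probeTape itv x b i⟩
      ⟨.scan j (i + 1), i + 1, scanTape itv x b (i + 1)⟩ :=
    ⟨(.scan j (i + 1), b.wit i, true),
      by simp [canonStep, hj, hi, hbj, probeTape_detects_intervention, hsig],
      by simp [movePos, probeTape, writeTape_writeTape, scanTape_succ]⟩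
  exact ((Relation.ReflTransGen.single h₁).tail h₂).tail h₃

theorem canonStep_reaches_scan (hb : bs[j]? = some b) (hm : b.Matches N itv) :
    ∀ i ≤ N + 1, Relation.ReflTransGen (ACfg.Step (canonStep N bs) itv)
      ⟨.start, 0, initTape itv x⟩ ⟨.scan j i, i, scanTape itv x b i⟩
  | 0, _ => .single ⟨(.scan j 0, initTape itv x 0, false),
      by simp [canonStep, (List.getElem?_eq_some_iff.mp hb).1],
      by simp [movePos, writeTape_self, scanTape_zero]⟩
  | i + 1, hi => (canonStep_reaches_scan hb hm i (by omega)).trans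
      (canonStep_scan_reaches_succ hb (by omega) (hm i (by omega)))

end Run

theorem outputs_canonMachine (N : ℕ) (bs : List Branch) (itv : ℕ → Option Bool)
    (x : ℕ → Bool) :
    Outputs (canonMachine N bs) itv x =
      {y | ∃ b ∈ bs, b.Matches N itv ∧ y = scanTape itv x b (N + 1)} := by
  rw [canonMachine, outputs_compile Ctl.code_injective
    (fun _ _ => mem_canonCtls_of_canonStep_ne_nil) (s₀ := .start) rfl]
  ext y
  constructor
  · rintro ⟨c, hc, hh, rfl⟩
    exact (CanonInv.of_reflTransGen hc).exists_matches_of_halted hh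
  · rintro ⟨b, hb, hm, rfl⟩
    obtain ⟨j, hj⟩ := List.mem_iff_getElem?.mp hb
    exact ⟨_, canonStep_reaches_scan hj hm (N + 1) le_rfl, by simp [canonStep], rfl⟩

def canonBranches (φ : LForm) (w : Lint → PropForm → Bool) (Y : Lint × PropForm → ℕ → Bool) :
    List Branch :=
  (φ.conds.filter fun p => !w p.1 p.2).map fun p => ⟨p.1.itv, Y p⟩

def canonModel (φ : LForm) (v : ℕ → Bool) (w : Lint → PropForm → Bool)
    (Y : Lint × PropForm → ℕ → Bool) : CSM where
  T := canonMachine φ.maxAtom (canonBranches φ w Y)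
  x i := decide (i ≤ φ.maxAtom) && v i
  fin := (Set.finite_Iic φ.maxAtom).subset fun i hi => by simp_all

theorem eval_scanTape_branch {N : ℕ} {α : Lint} {x y : ℕ → Bool}
    (hy : α.toProp.eval y = true) {β : PropForm} (hβ : β.maxAtom ≤ N) :
    β.eval (scanTape α.itv x ⟨α.itv, y⟩ (N + 1)) = β.eval y := by
  refine β.eval_congr fun i hi => ?_
  cases h : α.itv i with
  | none => simp [scanTape, h, show i < N + 1 by omega]
  | some b => simp [scanTape, initTape, h, Lint.eval_toProp_iff.mp hy i b h]

theorem mem_outputs_canonModel_iff {φ : LForm} {v : ℕ → Bool} {w : Lint → PropForm → Bool}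
    {Y : Lint × PropForm → ℕ → Bool} {α : Lint} (hα : α.maxAtom ≤ φ.maxAtom) {t : ℕ → Bool} :
    t ∈ Outputs (canonModel φ v w Y).T α.itv (canonModel φ v w Y).x ↔
      ∃ q ∈ φ.conds, w q.1 q.2 = false ∧ q.1 = α ∧
        t = scanTape α.itv (canonModel φ v w Y).x ⟨α.itv, Y q⟩ (φ.maxAtom + 1) := by
  simp only [canonModel, outputs_canonMachine, canonBranches, Set.mem_ofPred_eq, List.mem_map,
    List.mem_filter, Bool.not_eq_true', Branch.Matches]
  constructor
  · rintro ⟨_, ⟨q, ⟨hq, hqw⟩, rfl⟩, hm, rfl⟩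
    obtain rfl := Lint.eq_of_itv_eq_on (LForm.maxAtom_le_of_mem_conds hq).1 hα hm
    exact ⟨q, hq, hqw, rfl, rfl⟩
  · rintro ⟨q, hq, hqw, rfl, rfl⟩
    exact ⟨_, ⟨q, ⟨hq, hqw⟩, rfl⟩, fun _ _ => rfl, rfl⟩

theorem sat_canonModel {φ : LForm} {v : ℕ → Bool} {w : Lint → PropForm → Bool}
    {Y : Lint × PropForm → ℕ → Bool} (hφ : φ.evalA v w = true)
    (hY : ∀ p ∈ φ.conds, w p.1 p.2 = false → Refutes φ w p (Y p)) :
    (canonModel φ v w Y).Sat φ := by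
  refine (satGen_iff_evalA φ (fun i hi => by simp [canonModel, hi]) fun p hp => ?_).mpr hφ
  obtain ⟨hα, hβ⟩ := LForm.maxAtom_le_of_mem_conds hp
  simp only [mem_outputs_canonModel_iff hα]
  constructor
  · intro hout
    by_contra hwp
    rw [Bool.not_eq_true] at hwp
    have := hout _ ⟨p, hp, hwp, rfl, rfl⟩
    rw [eval_scanTape_branch (hY p hp hwp).1 hβ, (hY p hp hwp).2.2] at this
    cases this
  · rintro hwp _ ⟨q, hq, hqw, hqp, rfl⟩
    rw [← hqp, eval_scanTape_branch (hY q hq hqw).1 hβ]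
    exact (hY q hq hqw).2.1 p hp hqp.symm hwp

theorem exists_sat_of_not_AX_neg {φ : LForm} (h : ¬ AX (.neg φ)) : ∃ M : CSM, M.Sat φ := by
  obtain ⟨v, w, hφ, hrefutes⟩ := exists_refutes_of_not_AX_neg h
  choose! Y hY using hrefutes
  exact ⟨canonModel φ v w Y, sat_canonModel hφ hY⟩

/-- Completeness of `AX` for the class `M` of all causal simulation
models: every `L`-formula true in every model is a theorem of `AX`; equivalently,
every `AX`-consistent formula is satisfied by some model. -/
theorem AX_complete :
    (∀ φ : LForm, (∀ M : CSM, M.Sat φ) → AX φ) ∧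
    (∀ φ : LForm, ¬ AX (.neg φ) → ∃ M : CSM, M.Sat φ) := by
  refine ⟨fun φ hvalid => ?_, fun φ => exists_sat_of_not_AX_neg⟩
  by_contra hφ
  have hnn : ¬ AX (.neg (.neg φ)) := fun hnn => hφ <| .mp (.taut fun v w => by
    simp only [LForm.imp, LForm.evalA]
    cases φ.evalA v w <;> rfl) hnn
  obtain ⟨M, hM⟩ := exists_sat_of_not_AX_neg hnn
  exact hM (hvalid M)

end CausalSim
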